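/- arXiv:2507.01499 — 3 statements merged into one kernel-verified Lean document; each statement's English description precedes it below -/
import Mathlib

section
/- Let q, a, c be complex numbers with |q| < 1, q ≠ 0, and suppose c, a/c are not of the form q^n for any integer n and are nonzero, and c ≠ aq, a ≠ q. Then the basic hypergeometric series ₂φ₁(a, q²; c; q, λ) evaluated at λ = (q² - c)/((q - a)q) equals (q - a)(q - c)/((1 - q)(c - aq)), provided the series converges at λ (e.g. |λ| < 1). -/
/-- q-Pochhammer symbol $(a;q)_n$. -/
noncomputable def qPoch (a q : ℂ) (n : ℕ) : ℂ := ∏ j ∈ Finset.range n, (1 - a * q ^ j)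

/-- Basic hypergeometric series ₂φ₁(a, b; c; q, x). -/
noncomputable def phi21 (a b c q x : ℂ) : ℂ :=
  ∑' n : ℕ, qPoch a q n * qPoch b q n / (qPoch q q n * qPoch c q n) * x ^ n

/-!
The series telescopes. Writing `r n = (a;q)_n λ^n / (c;q)_n`, the `n`-th term equals
`(1 - q^{n+1}) / (1 - q) · r n`, and precisely for the value of `λ` in question this is
`u n - u (n + 1)` with `u n = (q - a) (q - c q^n) r n / ((1 - q)(c - a q))`. Convergence forces the
terms, hence `u n`, to tend to zero, so the sum is `u 0`.
-/

open Filter Topology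

theorem Summable.tsum_eq_sub_of_eq_sub_succ {G : Type*} [AddCommGroup G] [TopologicalSpace G]
    [IsTopologicalAddGroup G] [T2Space G] {f u : ℕ → G} {l : G} (hf : Summable f)
    (hfu : ∀ n, f n = u n - u (n + 1)) (hu : Tendsto u atTop (𝓝 l)) :
    ∑' n, f n = u 0 - l := by
  have hpartial : ∀ n, ∑ i ∈ Finset.range n, f i = u 0 - u n := fun n => by
    simp only [hfu, Finset.sum_range_sub']
  exact tendsto_nhds_unique hf.hasSum.tendsto_sum_nat
    (by simpa only [hpartial] using tendsto_const_nhds.sub hu)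

theorem pow_succ_ne_one_of_norm_lt_one {R : Type*} [SeminormedRing R] [NormOneClass R] {q : R}
    (hq : ‖q‖ < 1) (k : ℕ) : q ^ (k + 1) ≠ 1 := fun h => by
  have := (norm_pow_le' q k.succ_pos).trans_lt (pow_lt_one₀ (norm_nonneg q) hq k.succ_ne_zero)
  rw [h, norm_one] at this
  exact lt_irrefl 1 this

@[simp]
theorem qPoch_zero (a q : ℂ) : qPoch a q 0 = 1 := Finset.prod_range_zero _

theorem qPoch_succ (a q : ℂ) (n : ℕ) : qPoch a q (n + 1) = qPoch a q n * (1 - a * q ^ n) :=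
  Finset.prod_range_succ _ _

theorem qPoch_succ' (a q : ℂ) (n : ℕ) : qPoch a q (n + 1) = (1 - a) * qPoch (a * q) q n := by
  rw [qPoch, Finset.prod_range_succ', mul_comm]
  congr 1
  · simp
  · exact Finset.prod_congr rfl fun j _ => by ring

theorem qPoch_ne_zero {a q : ℂ} {n : ℕ} (h : ∀ j < n, a * q ^ j ≠ 1) : qPoch a q n ≠ 0 :=
  Finset.prod_ne_zero_iff.mpr fun j hj => sub_ne_zero.mpr (h j (Finset.mem_range.mp hj)).symm

theorem qPoch_sq_div_qPoch_self {q : ℂ} (hq : ∀ k, q ^ (k + 1) ≠ 1) (n : ℕ) :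
    qPoch (q ^ 2) q n / qPoch q q n = (1 - q ^ (n + 1)) / (1 - q) := by
  have hself : qPoch q q n ≠ 0 := qPoch_ne_zero fun j _ => by simpa [pow_succ'] using hq j
  have h1q : 1 - q ≠ 0 := sub_ne_zero.mpr (by simpa using (hq 0).symm)
  have key := (qPoch_succ' q q n).symm.trans (qPoch_succ q q n)
  rw [← sq] at key
  rw [div_eq_div_iff hself h1q]
  linear_combination key

noncomputable def phi21Term (a b c q x : ℂ) (n : ℕ) : ℂ :=
  qPoch a q n * qPoch b q n / (qPoch q q n * qPoch c q n) * x ^ n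

section Telescoping

variable (a c q lam : ℂ)

noncomputable def phi21Antideriv (n : ℕ) : ℂ :=
  (q - a) * (q - c * q ^ n) * (qPoch a q n * lam ^ n / qPoch c q n) / ((1 - q) * (c - a * q))

theorem phi21Term_sq_eq (hq : ∀ k, q ^ (k + 1) ≠ 1) (n : ℕ) :
    phi21Term a (q ^ 2) c q lam n =
      (1 - q ^ (n + 1)) / (1 - q) * (qPoch a q n * lam ^ n / qPoch c q n) := by
  rw [phi21Term, ← qPoch_sq_div_qPoch_self hq]
  ring

theorem phi21Term_sq_eq_antideriv_sub (hq : ∀ k, q ^ (k + 1) ≠ 1) (hc : ∀ j, c * q ^ j ≠ 1)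
    (hcaq : c ≠ a * q) (hlam : lam * ((q - a) * q) = q ^ 2 - c) (n : ℕ) :
    phi21Term a (q ^ 2) c q lam n =
      phi21Antideriv a c q lam n - phi21Antideriv a c q lam (n + 1) := by
  have h1q : 1 - q ≠ 0 := sub_ne_zero.mpr (by simpa using (hq 0).symm)
  have hC : qPoch c q n ≠ 0 := qPoch_ne_zero fun j _ => hc j
  have hcn : 1 - c * q ^ n ≠ 0 := sub_ne_zero.mpr (hc n).symm
  have hcaq' : c - a * q ≠ 0 := sub_ne_zero.mpr hcaq
  rw [phi21Term_sq_eq a c q lam hq, phi21Antideriv, phi21Antideriv, qPoch_succ, qPoch_succ]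
  field_simp
  rw [eq_div_iff (by simpa [mul_comm] using hcaq')]
  linear_combination qPoch a q n * lam ^ n * (1 - c * q ^ n) * (1 - a * q ^ n) * hlam

theorem tendsto_phi21Antideriv (hq : ‖q‖ < 1)
    (hterm : Tendsto (phi21Term a (q ^ 2) c q lam) atTop (𝓝 0)) :
    Tendsto (phi21Antideriv a c q lam) atTop (𝓝 0) := by
  have hq' := pow_succ_ne_one_of_norm_lt_one hq
  have hpow : Tendsto (q ^ ·) atTop (𝓝 0) := tendsto_pow_atTop_nhds_zero_of_norm_lt_one hq
  have hfactor : Tendsto (fun n => (1 - q) / (1 - q ^ (n + 1))) atTop (𝓝 ((1 - q) / 1)) := by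
    refine tendsto_const_nhds.div ?_ one_ne_zero
    simpa [pow_succ'] using tendsto_const_nhds.sub (hpow.const_mul q)
  have hratio : Tendsto (fun n => qPoch a q n * lam ^ n / qPoch c q n) atTop (𝓝 0) := by
    refine (mul_zero ((1 - q) / 1) ▸ hfactor.mul hterm).congr fun n => ?_
    have h1q : 1 - q ≠ 0 := sub_ne_zero.mpr (by simpa using (hq' 0).symm)
    have h1qn : 1 - q ^ (n + 1) ≠ 0 := sub_ne_zero.mpr (hq' n).symm
    rw [phi21Term_sq_eq a c q lam hq']
    field_simp
  unfold phi21Antideriv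
  simpa using (((tendsto_const_nhds.sub (hpow.const_mul c)).const_mul (q - a)).mul hratio).div_const
    ((1 - q) * (c - a * q))

end Telescoping

theorem stmt_0_general (q a c : ℂ) (hq : ‖q‖ < 1) (hq0 : q ≠ 0)
    (hc : ∀ n : ℤ, c ≠ q ^ n)
    (hcaq : c ≠ a * q) (haq : a ≠ q)
    (lam : ℂ) (hlam : lam = (q ^ 2 - c) / ((q - a) * q))
    (hconv : Summable (fun n : ℕ =>
      qPoch a q n * qPoch (q ^ 2) q n / (qPoch q q n * qPoch c q n) * lam ^ n)) :
    phi21 a (q ^ 2) c q lam = (q - a) * (q - c) / ((1 - q) * (c - a * q)) := by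
  have hcq (j : ℕ) : c * q ^ j ≠ 1 := fun h => hc (-j) <| by
    rw [zpow_neg, zpow_natCast]
    exact eq_inv_of_mul_eq_one_left h
  have hlam' : lam * ((q - a) * q) = q ^ 2 - c := by
    rw [hlam, div_mul_cancel₀ _ (mul_ne_zero (sub_ne_zero.mpr haq.symm) hq0)]
  have hsum := hconv.tsum_eq_sub_of_eq_sub_succ
    (phi21Term_sq_eq_antideriv_sub a c q lam (pow_succ_ne_one_of_norm_lt_one hq) hcq hcaq hlam')
    (tendsto_phi21Antideriv a c q lam hq hconv.tendsto_atTop_zero)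
  rw [phi21, hsum]
  simp [phi21Antideriv]

theorem stmt_0 (q a c : ℂ) (hq : ‖q‖ < 1) (hq0 : q ≠ 0)
    (hc : ∀ n : ℤ, c ≠ q ^ n) (hac : ∀ n : ℤ, a / c ≠ q ^ n)
    (hc0 : c ≠ 0) (hac0 : a / c ≠ 0)
    (hcaq : c ≠ a * q) (haq : a ≠ q)
    (lam : ℂ) (hlam : lam = (q ^ 2 - c) / ((q - a) * q))
    (hconv : Summable (fun n : ℕ =>
      qPoch a q n * qPoch (q ^ 2) q n / (qPoch q q n * qPoch c q n) * lam ^ n)) :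
    phi21 a (q ^ 2) c q lam = (q - a) * (q - c) / ((1 - q) * (c - a * q)) :=
  stmt_0_general q a c hq hq0 hc hcaq haq lam hlam hconv
end

section
/- Gosper's strange evaluation: for real α > 0 and β > 0, the hypergeometric series ₂F₁(1 - α, β; β + 2; β/(α + β)) equals (β + 1) · (α/(α + β))^α. -/
/-!
With $x = β/(α+β)$ one has
$(β)_n/(β+2)_n = β(β+1)/((β+n)(β+n+1)) = β(β+1)\int_0^1 t^{β+n-1}(1-t)\,dt$,
so summing the binomial series $\sum_n (1-α)_n (xt)^n/n! = (1-xt)^{α-1}$ under the integral gives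
${}_2F_1 = β(β+1)\int_0^1 t^{β-1}(1-t)(1-xt)^{α-1}\,dt$.
The relation $(α+β)x = β$ is exactly what makes $β\,t^{β-1}(1-t)(1-xt)^{α-1}$ the derivative of
$t^β(1-xt)^α$, so the integral equals $(1-x)^α/β$.
-/

/-- Rising factorial (Pochhammer symbol) $(a)_n$. -/
noncomputable def rising (a : ℝ) (n : ℕ) : ℝ := ∏ j ∈ Finset.range n, (a + j)

/-- Gauss hypergeometric series ₂F₁(a, b; c; x). -/
noncomputable def F21 (a b c x : ℝ) : ℝ :=
  ∑' n : ℕ, rising a n * rising b n / (rising 1 n * rising c n) * x ^ n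

open Finset Set MeasureTheory
open scoped Nat

lemma rising_eq_ascPochhammer_eval (a : ℝ) (n : ℕ) :
    rising a n = (ascPochhammer ℝ n).eval a := by
  induction n with
  | zero => simp [rising]
  | succ n ih => rw [rising, prod_range_succ, ← rising, ih, ascPochhammer_succ_eval]

lemma rising_one (n : ℕ) : rising 1 n = n ! := by
  rw [rising_eq_ascPochhammer_eval, ascPochhammer_eval_one]

lemma rising_div_factorial_eq_neg_one_pow_mul_choose (a : ℝ) (n : ℕ) :
    rising a n / n ! = (-1) ^ n * Ring.choose (-a) n := by
  have h := Ring.factorial_nsmul_multichoose_eq_ascPochhammer a n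
  rw [Polynomial.ascPochhammer_smeval_eq_eval, nsmul_eq_mul, ← rising_eq_ascPochhammer_eval] at h
  rw [Ring.choose_neg', Units.smul_def, zsmul_eq_mul, Int.cast_negOnePow_natCast, ← h,
    ← mul_assoc, ← mul_pow, neg_one_mul, neg_neg, one_pow, one_mul,
    mul_div_cancel_left₀ _ (by positivity)]

lemma binomialSeries_neg_apply (a y : ℝ) (n : ℕ) :
    binomialSeries ℝ (-a) n (fun _ => -y) = rising a n / n ! * y ^ n := by
  rw [rising_div_factorial_eq_neg_one_pow_mul_choose, binomialSeries_apply, List.ofFn_const,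
    List.prod_replicate, smul_eq_mul, neg_pow]
  ring

lemma neg_mem_eball_one {y : ℝ} (hy : |y| < 1) : -y ∈ Metric.eball (0 : ℝ) 1 := by
  rw [mem_eball_zero_iff, enorm_neg, ← ofReal_norm, Real.norm_eq_abs]
  exact_mod_cast ENNReal.ofReal_lt_one.2 hy

lemma hasSum_rising_div_factorial_mul_pow (a : ℝ) {y : ℝ} (hy : |y| < 1) :
    HasSum (fun n => rising a n / n ! * y ^ n) ((1 - y) ^ (-a)) := by
  have := (Real.one_add_rpow_hasFPowerSeriesOnBall_zero (a := -a)).hasSum (neg_mem_eball_one hy)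
  simpa only [binomialSeries_neg_apply, zero_sub, ← sub_eq_add_neg] using this

lemma summable_abs_rising_div_factorial_mul_pow (a : ℝ) {y : ℝ} (hy : |y| < 1) :
    Summable fun n => |rising a n / n ! * y ^ n| := by
  have := (binomialSeries ℝ (-a)).summable_norm_apply
    ((neg_mem_eball_one hy).trans_le binomialSeries_radius_ge_one)
  simpa only [binomialSeries_neg_apply, Real.norm_eq_abs] using this

lemma rising_mul_eq_mul_rising_add_two (b : ℝ) (n : ℕ) :
    rising b n * ((b + n) * (b + n + 1)) = b * (b + 1) * rising (b + 2) n := by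
  induction n with
  | zero => simp [rising]
  | succ n ih =>
    simp only [rising, prod_range_succ] at ih ⊢
    push_cast
    linear_combination (b + n + 2) * ih

lemma rising_div_rising_add_two {b : ℝ} (hb : 0 < b) (n : ℕ) :
    rising b n / rising (b + 2) n = b * (b + 1) / ((b + n) * (b + n + 1)) := by
  have hR : rising (b + 2) n ≠ 0 := prod_ne_zero_iff.2 fun j _ => by positivity
  rw [div_eq_div_iff hR (by positivity), rising_mul_eq_mul_rising_add_two]

lemma intervalIntegrable_rpow_sub_one_mul_one_sub {c : ℝ} (hc : 0 < c) :
    IntervalIntegrable (fun t : ℝ => t ^ (c - 1) * (1 - t)) volume 0 1 :=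
  (intervalIntegral.intervalIntegrable_rpow' (by linarith)).mul_continuousOn (by fun_prop)

lemma integral_rpow_sub_one_mul_one_sub {c : ℝ} (hc : 0 < c) :
    ∫ t in (0:ℝ)..1, t ^ (c - 1) * (1 - t) = 1 / (c * (c + 1)) := by
  have hsplit : EqOn (fun t : ℝ => t ^ (c - 1) * (1 - t)) (fun t => t ^ (c - 1) - t ^ (c - 1 + 1))
      (uIcc 0 1) := by
    intro t ht
    rw [Set.uIcc_of_le zero_le_one] at ht
    rcases ht.1.eq_or_lt with rfl | ht0
    · simp [Real.zero_rpow hc.ne']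
    · simp only [Real.rpow_add_one ht0.ne']
      ring
  rw [intervalIntegral.integral_congr hsplit, intervalIntegral.integral_sub
    (intervalIntegral.intervalIntegrable_rpow' (by linarith))
    (intervalIntegral.intervalIntegrable_rpow' (by linarith)),
    integral_rpow (Or.inl (by linarith)), integral_rpow (Or.inl (by linarith))]
  simp only [sub_add_cancel, Real.one_rpow, Real.zero_rpow hc.ne',
    Real.zero_rpow (by linarith : c + 1 ≠ 0)]
  field_simp
  ring

lemma integrableOn_rpow_sub_one_mul_one_sub {c : ℝ} (hc : 0 < c) :
    IntegrableOn (fun t : ℝ => t ^ (c - 1) * (1 - t)) (Ioc 0 1) :=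
  (intervalIntegrable_iff_integrableOn_Ioc_of_le zero_le_one).1
    (intervalIntegrable_rpow_sub_one_mul_one_sub hc)

lemma setIntegral_Ioc_rpow_sub_one_mul_one_sub {c : ℝ} (hc : 0 < c) :
    ∫ t in Ioc (0:ℝ) 1, t ^ (c - 1) * (1 - t) = 1 / (c * (c + 1)) := by
  rw [← intervalIntegral.integral_of_le zero_le_one, integral_rpow_sub_one_mul_one_sub hc]

lemma tsum_div_mul_add_one_eq_integral {a : ℕ → ℝ} (ha : Summable fun n => |a n|) {β : ℝ}
    (hβ : 0 < β) :
    ∑' n, a n / ((β + n) * (β + n + 1))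
      = ∫ t in (0:ℝ)..1, t ^ (β - 1) * (1 - t) * ∑' n, a n * t ^ n := by
  set F : ℕ → ℝ → ℝ := fun n t => a n * (t ^ (β + n - 1) * (1 - t))
  have hβn (n : ℕ) : 0 < β + n := by positivity
  have hF_int (n : ℕ) : IntegrableOn (F n) (Ioc 0 1) :=
    (integrableOn_rpow_sub_one_mul_one_sub (hβn n)).const_mul (a n)
  have hF (n : ℕ) : ∫ t in Ioc (0:ℝ) 1, F n t = a n / ((β + n) * (β + n + 1)) := by
    rw [integral_const_mul, setIntegral_Ioc_rpow_sub_one_mul_one_sub (hβn n), mul_one_div]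
  have hF_norm (n : ℕ) : ∫ t in Ioc (0:ℝ) 1, ‖F n t‖ = |a n| / ((β + n) * (β + n + 1)) := by
    have hnorm : ∀ t ∈ Ioc (0:ℝ) 1, ‖F n t‖ = |a n| * (t ^ (β + n - 1) * (1 - t)) := by
      intro t ht
      have : 0 ≤ t ^ (β + n - 1) * (1 - t) :=
        mul_nonneg (Real.rpow_nonneg ht.1.le _) (sub_nonneg.2 ht.2)
      rw [Real.norm_eq_abs, abs_mul, abs_of_nonneg this]
    rw [setIntegral_congr_fun measurableSet_Ioc hnorm, integral_const_mul,
      setIntegral_Ioc_rpow_sub_one_mul_one_sub (hβn n), mul_one_div]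
  have hF_sum : Summable fun n => ∫ t in Ioc (0:ℝ) 1, ‖F n t‖ := by
    refine (ha.div_const (β * (β + 1))).of_nonneg_of_le (fun n => ?_) (fun n => ?_)
    · rw [hF_norm]
      positivity
    · rw [hF_norm]
      have := hβn n
      gcongr <;> linarith
  have hF_tsum : ∀ t ∈ Ioc (0:ℝ) 1,
      ∑' n, F n t = t ^ (β - 1) * (1 - t) * ∑' n, a n * t ^ n := by
    intro t ht
    rw [← tsum_mul_left]
    refine tsum_congr fun n => ?_
    dsimp only [F]
    rw [show β + n - 1 = β - 1 + n by ring, Real.rpow_add ht.1, Real.rpow_natCast]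
    ring
  rw [intervalIntegral.integral_of_le zero_le_one,
    ← setIntegral_congr_fun measurableSet_Ioc hF_tsum,
    ← integral_tsum_of_summable_integral_norm hF_int hF_sum]
  exact tsum_congr fun n => (hF n).symm

lemma hasDerivAt_rpow_mul_one_sub_mul_rpow {α β x t : ℝ} (hx : (α + β) * x = β)
    (ht : 0 < t) (hxt : 0 < 1 - x * t) :
    HasDerivAt (fun t => t ^ β * (1 - x * t) ^ α)
      (β * (t ^ (β - 1) * (1 - t) * (1 - x * t) ^ (α - 1))) t := by
  have hpow : HasDerivAt (fun t : ℝ => t ^ β) (β * t ^ (β - 1)) t :=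
    Real.hasDerivAt_rpow_const (Or.inl ht.ne')
  have hlin : HasDerivAt (fun t : ℝ => 1 - x * t) (-x) t := by
    simpa using ((hasDerivAt_id t).const_mul x).const_sub 1
  have hcomp := (Real.hasDerivAt_rpow_const (p := α) (Or.inl hxt.ne')).comp t hlin
  refine (hpow.mul hcomp).congr_deriv ?_
  have e1 : (1 - x * t) ^ α = (1 - x * t) ^ (α - 1) * (1 - x * t) := by
    rw [← Real.rpow_add_one hxt.ne']
    ring_nf
  have e2 : t ^ β = t ^ (β - 1) * t := by
    rw [← Real.rpow_add_one ht.ne']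
    ring_nf
  simp only [Function.comp_apply]
  rw [e1, e2]
  linear_combination (-(t ^ (β - 1) * (1 - x * t) ^ (α - 1) * t)) * hx

lemma integral_rpow_sub_one_mul_one_sub_mul_rpow {α β x : ℝ} (hβ : 0 < β)
    (hx : (α + β) * x = β) (hx1 : x < 1) :
    β * ∫ t in (0:ℝ)..1, t ^ (β - 1) * (1 - t) * (1 - x * t) ^ (α - 1) = (1 - x) ^ α := by
  have hpos : ∀ t ∈ Icc (0:ℝ) 1, 0 < 1 - x * t := fun t ht => by
    rcases le_total 0 x with h | h <;> nlinarith [ht.1, ht.2]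
  have hcont : ContinuousOn (fun t : ℝ => t ^ β * (1 - x * t) ^ α) (Icc 0 1) := by
    refine ContinuousOn.mul (fun t _ => ?_) (fun t ht => ?_)
    · exact (Real.continuousAt_rpow_const t β (Or.inr hβ.le)).continuousWithinAt
    · exact ((Real.continuousAt_rpow_const _ α (Or.inl (hpos t ht).ne')).comp
        (f := fun t : ℝ => 1 - x * t) (by fun_prop)).continuousWithinAt
  have hderiv : ∀ t ∈ Ioo (0:ℝ) 1, HasDerivAt (fun t => t ^ β * (1 - x * t) ^ α)
      (β * (t ^ (β - 1) * (1 - t) * (1 - x * t) ^ (α - 1))) t := fun t ht =>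
    hasDerivAt_rpow_mul_one_sub_mul_rpow hx ht.1 (hpos t (Ioo_subset_Icc_self ht))
  have hnonneg : ∀ t ∈ Ioo (0:ℝ) 1,
      0 ≤ β * (t ^ (β - 1) * (1 - t) * (1 - x * t) ^ (α - 1)) := fun t ht =>
    mul_nonneg hβ.le (mul_nonneg (mul_nonneg (Real.rpow_nonneg ht.1.le _)
      (sub_nonneg.2 ht.2.le)) (Real.rpow_nonneg (hpos t (Ioo_subset_Icc_self ht)).le _))
  have hint := intervalIntegral.intervalIntegrable_deriv_of_nonneg (a := 0) (b := 1)
    (by rwa [Set.uIcc_of_le zero_le_one]) (by simpa using hderiv) (by simpa using hnonneg)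
  rw [← intervalIntegral.integral_const_mul,
    intervalIntegral.integral_eq_sub_of_hasDerivAt_of_le zero_le_one hcont hderiv hint]
  simp [Real.zero_rpow hβ.ne']

/-- Gosper's strange evaluation. -/
theorem stmt_4 (α β : ℝ) (hα : 0 < α) (hβ : 0 < β) :
    F21 (1 - α) β (β + 2) (β / (α + β)) = (β + 1) * (α / (α + β)) ^ α := by
  set x := β / (α + β)
  have hαβ : 0 < α + β := by positivity
  have hx : (α + β) * x = β := mul_div_cancel₀ _ hαβ.ne'
  have hx0 : 0 ≤ x := by positivity
  have hx1 : x < 1 := (div_lt_one hαβ).2 (by linarith)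
  have hterm (n : ℕ) : rising (1 - α) n * rising β n / (rising 1 n * rising (β + 2) n) * x ^ n
      = β * (β + 1) * (rising (1 - α) n / n ! * x ^ n / ((β + n) * (β + n + 1))) := by
    rw [rising_one, mul_div_mul_comm, rising_div_rising_add_two hβ]
    ring
  have hbinom : EqOn
      (fun t => t ^ (β - 1) * (1 - t) * ∑' n, rising (1 - α) n / n ! * x ^ n * t ^ n)
      (fun t => t ^ (β - 1) * (1 - t) * (1 - x * t) ^ (α - 1)) (uIcc 0 1) := by
    intro t ht
    rw [Set.uIcc_of_le zero_le_one] at ht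
    have hxt : |x * t| < 1 := by
      rw [abs_of_nonneg (mul_nonneg hx0 ht.1)]
      nlinarith [ht.1, ht.2]
    simp only [mul_assoc, ← mul_pow]
    rw [(hasSum_rising_div_factorial_mul_pow (1 - α) hxt).tsum_eq, neg_sub]
  have hsum := summable_abs_rising_div_factorial_mul_pow (1 - α) (abs_lt.2 ⟨by linarith, hx1⟩)
  rw [F21, tsum_congr hterm, tsum_mul_left, tsum_div_mul_add_one_eq_integral hsum hβ,
    intervalIntegral.integral_congr hbinom, mul_comm β, mul_assoc,
    integral_rpow_sub_one_mul_one_sub_mul_rpow hβ hx hx1]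
  congr 2
  field_simp
  linarith
end

section
/- Limit of the q-binomial theorem: for a real number α and complex z with |z| < 1, one has lim_{q → 1⁻} ∑_{n=0}^∞ ((q^α; q)_n / (q; q)_n) z^n = ∑_{n=0}^∞ ((α)_n / n!) z^n = (1 - z)^{-α}, where the limit is taken over real q ∈ (0,1). -/
/-- Complex rising factorial $(a)_n$. -/
noncomputable def risingC (a : ℂ) (n : ℕ) : ℂ := ∏ j ∈ Finset.range n, (a + j)

/-!
Each factor `(1 - q^(α+j)) / (1 - q^(j+1))` of `(q^α; q)_n / (q; q)_n` is a quotient of two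
difference quotients of `x ↦ x^s` at `x = 1`, so it tends to `(α+j)/(j+1)` as `q → 1`. For
`q ∈ [1/2, 1)` it is at most `(|α|+1+j)/(j+1)` in absolute value, up to a factor
`q^(α+j) ≤ 2^|α|` for the finitely many `j` with `α + j < 0`. Hence the `q`-series is dominated by
a multiple of the binomial series `∑ ((|α|+1)_n / n!) |z|^n`, which converges for `|z| < 1`, and
Tannery's theorem gives the limit. The limiting series is the binomial series of `(1 - z)^(-α)`.
-/

open Filter Finset
open scoped Topology Nat

lemma risingC_eq_ascPochhammer_eval (a : ℂ) (n : ℕ) :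
    risingC a n = (ascPochhammer ℂ n).eval a := by
  induction n with
  | zero => simp [risingC]
  | succ n ih => rw [risingC, prod_range_succ, ← risingC, ih, ascPochhammer_succ_eval]

lemma risingC_div_factorial (a : ℂ) (n : ℕ) :
    risingC a n / n ! = Ring.choose (a + n - 1) n := by
  rw [← Ring.multichoose_eq, div_eq_iff (mod_cast n.factorial_ne_zero), mul_comm,
    ← nsmul_eq_mul, Ring.factorial_nsmul_multichoose_eq_ascPochhammer,
    Polynomial.ascPochhammer_smeval_eq_eval, risingC_eq_ascPochhammer_eval]

lemma risingC_ofReal_div_factorial (b : ℝ) (n : ℕ) :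
    risingC b n / n ! = ((∏ j ∈ range n, (b + j) / (j + 1) : ℝ) : ℂ) := by
  rw [prod_div_distrib, ← prod_range_add_one_eq_factorial, risingC]
  push_cast
  rfl

lemma hasFPowerSeriesOnBall_one_sub_cpow_neg (a : ℂ) :
    HasFPowerSeriesOnBall (fun z ↦ (1 - z) ^ (-a))
      (.ofScalars ℂ fun n ↦ risingC a n / n !) 0 1 := by
  simpa [risingC_div_factorial, Complex.cpow_neg] using
    Complex.one_div_one_sub_cpow_hasFPowerSeriesOnBall_zero a

lemma hasSum_risingC_div_factorial_mul_pow (a : ℂ) {z : ℂ} (hz : ‖z‖ < 1) :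
    HasSum (fun n ↦ risingC a n / n ! * z ^ n) ((1 - z) ^ (-a)) := by
  have := (hasFPowerSeriesOnBall_one_sub_cpow_neg a).hasSum (y := z)
    (by simpa [← ofReal_norm] using hz)
  simpa [FormalMultilinearSeries.ofScalars_apply_eq, mul_comm] using this

lemma summable_norm_risingC_div_factorial_mul_pow (a : ℂ) {r : ℝ} (hr0 : 0 ≤ r) (hr : r < 1) :
    Summable fun n ↦ ‖risingC a n / (n ! : ℂ)‖ * r ^ n := by
  lift r to NNReal using hr0
  have hr' : (r : ENNReal) <
      (FormalMultilinearSeries.ofScalars ℂ fun n ↦ risingC a n / n !).radius :=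
    lt_of_lt_of_le (by exact_mod_cast hr) (hasFPowerSeriesOnBall_one_sub_cpow_neg a).r_le
  simpa [FormalMultilinearSeries.ofScalars_norm] using
    FormalMultilinearSeries.summable_norm_mul_pow _ hr'

lemma one_sub_rpow_le_max_mul {q : ℝ} (hq0 : 0 < q) (hq1 : q < 1) {s t : ℝ} (ht : 0 < t) :
    1 - q ^ s ≤ max 1 (s / t) * (1 - q ^ t) := by
  have hqt : q ^ t < 1 := Real.rpow_lt_one hq0.le hq1 ht
  rcases le_or_gt s t with hst | hts
  · have : q ^ t ≤ q ^ s := Real.rpow_le_rpow_of_exponent_ge hq0 hq1.le hst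
    nlinarith [le_max_left 1 (s / t)]
  · -- Bernoulli's inequality for the exponent `s / t ≥ 1`, applied to `q ^ t = 1 + (q ^ t - 1)`
    have hbern := one_add_mul_self_le_rpow_one_add (by linarith [Real.rpow_pos_of_pos hq0 t])
      ((one_le_div ht).2 hts.le) (s := q ^ t - 1)
    rw [add_sub_cancel, ← Real.rpow_mul hq0.le, mul_div_cancel₀ _ ht.ne'] at hbern
    nlinarith [le_max_right 1 (s / t)]

lemma abs_one_sub_rpow_le {q : ℝ} (hq0 : 0 < q) (hq1 : q < 1) (s : ℝ) {t : ℝ} (ht : 0 < t) :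
    |1 - q ^ s| ≤ q ^ min s 0 * (max 1 (|s| / t) * (1 - q ^ t)) := by
  rcases le_or_gt 0 s with hs | hs
  · rw [min_eq_right hs, Real.rpow_zero, one_mul, abs_of_nonneg hs,
      abs_of_nonneg (by linarith [Real.rpow_le_one hq0.le hq1.le hs])]
    exact one_sub_rpow_le_max_mul hq0 hq1 ht
  · have hneg : q ^ s * (1 - q ^ (-s)) = q ^ s - 1 := by
      rw [mul_sub, mul_one, ← Real.rpow_add hq0, add_neg_cancel, Real.rpow_zero]
    rw [min_eq_left hs.le, abs_of_neg hs, abs_sub_comm,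
      abs_of_nonneg (by linarith [Real.one_le_rpow_of_pos_of_le_one_of_nonpos hq0 hq1.le hs.le]),
      ← hneg]
    exact mul_le_mul_of_nonneg_left (one_sub_rpow_le_max_mul hq0 hq1 ht)
      (Real.rpow_nonneg hq0.le _)

lemma tendsto_one_sub_rpow_div_one_sub (s : ℝ) :
    Tendsto (fun q : ℝ ↦ (1 - q ^ s) / (1 - q)) (𝓝[≠] 1) (𝓝 s) := by
  have h := hasDerivAt_iff_tendsto_slope.mp
    (Real.hasDerivAt_rpow_const (x := 1) (p := s) (Or.inl one_ne_zero))
  simp only [Real.one_rpow, mul_one] at h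
  refine h.congr fun q ↦ ?_
  rw [slope_def_field, Real.one_rpow, ← neg_div_neg_eq, neg_sub, neg_sub]

lemma prod_range_ite_lt_le_pow {A : ℝ} (hA : 1 ≤ A) (N n : ℕ) :
    ∏ j ∈ range n, (if j < N then A else 1) ≤ A ^ N := by
  rw [prod_ite, prod_const_one, mul_one, prod_const]
  exact pow_le_pow_right₀ hA <| (card_le_card fun j hj ↦ mem_range.2 (mem_filter.1 hj).2).trans
    (card_range N).le

noncomputable def qBinomFactor (α q : ℝ) (j : ℕ) : ℝ :=
  (1 - q ^ (α + j)) / (1 - q ^ ((j : ℝ) + 1))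

lemma qPoch_div_qPoch_eq_prod_qBinomFactor (α : ℝ) {q : ℝ} (hq : 0 < q) (n : ℕ) :
    qPoch ((q ^ α : ℝ) : ℂ) q n / qPoch q q n =
      ((∏ j ∈ range n, qBinomFactor α q j : ℝ) : ℂ) := by
  simp only [qPoch, qBinomFactor, ← prod_div_distrib, Complex.ofReal_prod]
  refine prod_congr rfl fun j _ ↦ ?_
  rw [Real.rpow_add hq, Real.rpow_add hq, Real.rpow_natCast, Real.rpow_one]
  push_cast
  ring

lemma tendsto_qBinomFactor (α : ℝ) (j : ℕ) :
    Tendsto (fun q ↦ qBinomFactor α q j) (𝓝[≠] 1) (𝓝 ((α + j) / (j + 1))) := by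
  refine ((tendsto_one_sub_rpow_div_one_sub _).div (tendsto_one_sub_rpow_div_one_sub _)
    (by positivity)).congr' ?_
  filter_upwards [self_mem_nhdsWithin] with q hq
  exact div_div_div_cancel_right₀ (sub_ne_zero_of_ne (Ne.symm hq)) _ _

lemma abs_qBinomFactor_le (α : ℝ) {q : ℝ} (hq : q ∈ Set.Ico (1 / 2 : ℝ) 1) (j : ℕ) :
    |qBinomFactor α q j| ≤
      (if j < ⌈|α|⌉₊ then 2 ^ |α| else 1) * ((|α| + 1 + j) / (j + 1)) := by
  obtain ⟨hq2, hq1⟩ := hq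
  have hq0 : 0 < q := by linarith
  have hj : (0 : ℝ) < j + 1 := by positivity
  have hden : 0 < 1 - q ^ ((j : ℝ) + 1) := sub_pos.2 (Real.rpow_lt_one hq0.le hq1 hj)
  have hpow : q ^ min (α + j) 0 ≤ if j < ⌈|α|⌉₊ then 2 ^ |α| else 1 := by
    split_ifs with hjα
    · calc q ^ min (α + j) 0 ≤ q ^ (-|α|) :=
            Real.rpow_le_rpow_of_exponent_ge hq0 hq1.le
              (le_min (by linarith [neg_abs_le α, j.cast_nonneg (α := ℝ)]) (by simp))
        _ = q⁻¹ ^ |α| := by rw [Real.rpow_neg hq0.le, Real.inv_rpow hq0.le]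
        _ ≤ 2 ^ |α| := Real.rpow_le_rpow (by positivity)
            (by rw [inv_le_comm₀ hq0 two_pos]; linarith) (abs_nonneg α)
    · have : |α| ≤ j := Nat.ceil_le.1 (not_lt.1 hjα)
      rw [min_eq_right (by linarith [neg_abs_le α]), Real.rpow_zero]
  have hmax : max 1 (|α + j| / (j + 1)) ≤ (|α| + 1 + j) / (j + 1) := by
    refine max_le ((le_div_iff₀ hj).2 (by linarith [abs_nonneg α])) ?_
    gcongr
    calc |α + j| ≤ |α| + |(j : ℝ)| := abs_add_le _ _
      _ ≤ |α| + 1 + j := by rw [Nat.abs_cast]; linarith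
  rw [qBinomFactor, abs_div, abs_of_pos hden, div_le_iff₀ hden, mul_assoc]
  exact (abs_one_sub_rpow_le hq0 hq1 _ hj).trans
    (mul_le_mul hpow (by gcongr) (by positivity) (by split_ifs <;> positivity))

lemma abs_prod_qBinomFactor_le (α : ℝ) {q : ℝ} (hq : q ∈ Set.Ico (1 / 2 : ℝ) 1) (n : ℕ) :
    |∏ j ∈ range n, qBinomFactor α q j| ≤
      (2 ^ |α|) ^ ⌈|α|⌉₊ * ∏ j ∈ range n, (|α| + 1 + j) / (j + 1) := by
  rw [abs_prod]
  refine (prod_le_prod (fun _ _ ↦ abs_nonneg _) fun j _ ↦ abs_qBinomFactor_le α hq j).trans ?_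
  rw [prod_mul_distrib]
  exact mul_le_mul_of_nonneg_right
    (prod_range_ite_lt_le_pow (Real.one_le_rpow one_le_two (abs_nonneg α)) _ _)
    (prod_nonneg fun _ _ ↦ by positivity)

theorem tendsto_tsum_qPoch_div_qPoch_mul_pow (α : ℝ) {z : ℂ} (hz : ‖z‖ < 1) :
    Tendsto (fun q : ℝ ↦ ∑' n, qPoch ((q ^ α : ℝ) : ℂ) q n / qPoch q q n * z ^ n)
      (𝓝[Set.Ioo 0 1] 1) (𝓝 (∑' n, risingC α n / n ! * z ^ n)) := by
  have hlim (n : ℕ) :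
      Tendsto (fun q : ℝ ↦ ((∏ j ∈ range n, qBinomFactor α q j : ℝ) : ℂ) * z ^ n)
        (𝓝[Set.Ioo 0 1] 1) (𝓝 (risingC α n / n ! * z ^ n)) := by
    rw [risingC_ofReal_div_factorial]
    refine ((Complex.continuous_ofReal.tendsto _).comp
      (tendsto_finsetProd _ fun j _ ↦ ?_)).mul_const _
    exact (tendsto_qBinomFactor α j).mono_left (nhdsWithin_mono _ fun q hq ↦ hq.2.ne)
  have hbound : ∀ᶠ q in 𝓝[Set.Ioo 0 1] 1, ∀ n,
      ‖((∏ j ∈ range n, qBinomFactor α q j : ℝ) : ℂ) * z ^ n‖ ≤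
        (2 ^ |α|) ^ ⌈|α|⌉₊ * (‖risingC ((|α| + 1 : ℝ) : ℂ) n / (n ! : ℂ)‖ * ‖z‖ ^ n) := by
    filter_upwards [self_mem_nhdsWithin,
      nhdsWithin_le_nhds (Ioi_mem_nhds (by norm_num : (1 / 2 : ℝ) < 1))] with q hq hq2 n
    have hD : 0 ≤ ∏ j ∈ range n, (|α| + 1 + (j : ℝ)) / (j + 1) :=
      prod_nonneg fun _ _ ↦ by positivity
    rw [risingC_ofReal_div_factorial, norm_mul, norm_pow, Complex.norm_real, Complex.norm_real,
      Real.norm_eq_abs, Real.norm_eq_abs, abs_of_nonneg hD, ← mul_assoc]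
    exact mul_le_mul_of_nonneg_right (abs_prod_qBinomFactor_le α ⟨le_of_lt hq2, hq.2⟩ n)
      (by positivity)
  refine (tendsto_tsum_of_dominated_convergence
    ((summable_norm_risingC_div_factorial_mul_pow _ (norm_nonneg z) hz).mul_left _)
    hlim hbound).congr' ?_
  filter_upwards [self_mem_nhdsWithin] with q hq
  simp only [qPoch_div_qPoch_eq_prod_qBinomFactor α hq.1]

/-- Limit of the q-binomial theorem as q → 1⁻ over q ∈ (0,1). -/
theorem stmt_6 (α : ℝ) (z : ℂ) (hz : ‖z‖ < 1) :
    Filter.Tendsto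
      (fun q : ℝ => ∑' n : ℕ, qPoch ((q ^ α : ℝ) : ℂ) (q : ℂ) n / qPoch (q : ℂ) (q : ℂ) n * z ^ n)
      (nhdsWithin 1 (Set.Ioo (0 : ℝ) 1))
      (nhds (∑' n : ℕ, risingC (α : ℂ) n / (n.factorial : ℂ) * z ^ n)) ∧
    (∑' n : ℕ, risingC (α : ℂ) n / (n.factorial : ℂ) * z ^ n) = (1 - z) ^ (-(α : ℂ)) :=
  ⟨tendsto_tsum_qPoch_div_qPoch_mul_pow α hz, (hasSum_risingC_div_factorial_mul_pow α hz).tsum_eq⟩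
end
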